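/- Let A' be an irreducible deterministic complete finite automaton with a stable pair (s,t), and let B' be the quotient of A' by the congruence generated by (s,t). Then the period of B' (gcd of cycle lengths of its underlying graph) equals the period of A'. -/

import Mathlib

def dcaRun {Q A : Type*} (δ : Q → A → Q) (p : Q) (w : List A) : Q := w.foldl δ p

def Synchronizable {Q A : Type*} (δ : Q → A → Q) (p q : Q) : Prop :=
  ∃ w : List A, dcaRun δ p w = dcaRun δ q w

def StablePair {Q A : Type*} (δ : Q → A → Q) (p q : Q) : Prop :=
  ∀ u : List A, Synchronizable δ (dcaRun δ p u) (dcaRun δ q u)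

/-- The set of lengths of cycles of the underlying graph of the automaton. -/
def CycleLengths {Q A : Type*} (δ : Q → A → Q) : Set ℕ :=
  {n | 0 < n ∧ ∃ (p : Q) (w : List A), w.length = n ∧ dcaRun δ p w = p}

/-- The gcd of a set of natural numbers: the common divisor divisible by every
common divisor. -/
noncomputable def setGcd (S : Set ℕ) : ℕ :=
  sInf {d | (∀ n ∈ S, d ∣ n) ∧ ∀ e : ℕ, (∀ n ∈ S, e ∣ n) → e ∣ d}

/-- The period of an automaton: the gcd of the lengths of all its cycles. -/
noncomputable def dcaPeriod {Q A : Type*} (δ : Q → A → Q) : ℕ :=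
  setGcd (CycleLengths δ)

/-!
If `e` divides every cycle length of an irreducible automaton, the length modulo `e` of a word
leading from a fixed state to `p` depends only on `p`; this gives a phase `φ : Q → ZMod e` that
every letter advances by one. Reading a word that synchronizes `s` and `t` shows `φ s = φ t`, so
the kernel of `φ` is a congruence identifying `s` and `t`, hence coarser than the congruence they
generate. The phase therefore descends to the quotient, where it forces `e` to divide every cycle
length. Conversely every cycle projects to a cycle of the quotient, so both automata have the
same common divisors of cycle lengths, hence the same period.
-/

section Automaton

variable {Q A : Type*} (δ : Q → A → Q)

theorem dcaRun_append (p : Q) (u v : List A) :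
    dcaRun δ p (u ++ v) = dcaRun δ (dcaRun δ p u) v :=
  List.foldl_append ..

theorem dcaRun_map {Q' : Type*} {δ' : Q' → A → Q'} {f : Q → Q'}
    (hf : ∀ p a, δ' (f p) a = f (δ p a)) (p : Q) (w : List A) :
    dcaRun δ' (f p) w = f (dcaRun δ p w) := by
  induction w generalizing p with
  | nil => rfl
  | cons a w ih => exact (congrArg (dcaRun δ' · w) (hf p a)).trans (ih (δ p a))

theorem cycleLengths_subset_of_map {Q' : Type*} {δ' : Q' → A → Q'} {f : Q → Q'}
    (hf : ∀ p a, δ' (f p) a = f (δ p a)) : CycleLengths δ ⊆ CycleLengths δ' := by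
  rintro n ⟨hn, p, w, hlen, hp⟩
  exact ⟨hn, f p, w, hlen, by rw [dcaRun_map δ hf, hp]⟩

theorem dvd_length_of_dcaRun_eq_self {e : ℕ} (he : ∀ n ∈ CycleLengths δ, e ∣ n)
    {p : Q} {w : List A} (hw : dcaRun δ p w = p) : e ∣ w.length := by
  rcases Nat.eq_zero_or_pos w.length with h0 | h0
  · simp [h0]
  · exact he _ ⟨h0, p, w, rfl, hw⟩

theorem length_cast_eq_of_dcaRun_eq (hirr : ∀ p q : Q, ∃ w : List A, dcaRun δ p w = q)
    {e : ℕ} (he : ∀ n ∈ CycleLengths δ, e ∣ n) {p : Q} {u v : List A}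
    (huv : dcaRun δ p u = dcaRun δ p v) : (u.length : ZMod e) = v.length := by
  obtain ⟨w, hw⟩ := hirr (dcaRun δ p u) p
  have cycle_u : e ∣ (u ++ w).length :=
    dvd_length_of_dcaRun_eq_self δ he (by rw [dcaRun_append, hw])
  have cycle_v : e ∣ (v ++ w).length :=
    dvd_length_of_dcaRun_eq_self δ he (by rw [dcaRun_append, ← huv, hw])
  rw [← ZMod.natCast_eq_zero_iff, List.length_append, Nat.cast_add] at cycle_u cycle_v
  linear_combination cycle_u - cycle_v

def IsPhase {e : ℕ} (φ : Q → ZMod e) : Prop :=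
  ∀ p a, φ (δ p a) = φ p + 1

variable {δ}

theorem IsPhase.apply_dcaRun {e : ℕ} {φ : Q → ZMod e} (hφ : IsPhase δ φ) (p : Q) (w : List A) :
    φ (dcaRun δ p w) = φ p + w.length := by
  induction w generalizing p with
  | nil => simp [dcaRun]
  | cons a w ih =>
    change φ (dcaRun δ (δ p a) w) = _
    rw [ih, hφ, List.length_cons, Nat.cast_succ]
    ring

theorem IsPhase.dvd_of_mem_cycleLengths {e : ℕ} {φ : Q → ZMod e} (hφ : IsPhase δ φ) :
    ∀ n ∈ CycleLengths δ, e ∣ n := by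
  rintro n ⟨-, p, w, rfl, hw⟩
  have h := hφ.apply_dcaRun p w
  rw [hw, left_eq_add] at h
  exact (ZMod.natCast_eq_zero_iff _ _).mp h

theorem IsPhase.eq_of_synchronizable {e : ℕ} {φ : Q → ZMod e} (hφ : IsPhase δ φ) {p q : Q}
    (hpq : Synchronizable δ p q) : φ p = φ q := by
  obtain ⟨w, hw⟩ := hpq
  have h := congrArg φ hw
  rwa [hφ.apply_dcaRun, hφ.apply_dcaRun, add_left_inj] at h

theorem IsPhase.lift {r : Setoid Q} {δq : Quotient r → A → Quotient r}
    (hδq : ∀ (p : Q) (a : A), δq ⟦p⟧ a = ⟦δ p a⟧) {e : ℕ} {φ : Q → ZMod e}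
    (hφ : IsPhase δ φ) (hr : ∀ p q, r p q → φ p = φ q) :
    IsPhase δq (Quotient.lift φ hr) := by
  rintro ⟨p⟩ a
  exact (congrArg (Quotient.lift φ hr) (hδq p a)).trans (hφ p a)

theorem exists_isPhase (hirr : ∀ p q : Q, ∃ w : List A, dcaRun δ p w = q)
    {e : ℕ} (he : ∀ n ∈ CycleLengths δ, e ∣ n) : ∃ φ : Q → ZMod e, IsPhase δ φ := by
  cases isEmpty_or_nonempty Q with
  | inl _ => exact ⟨isEmptyElim, isEmptyElim⟩
  | inr hQ =>
    obtain ⟨q₀⟩ := hQ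
    choose word hword using hirr q₀
    refine ⟨fun p => (word p).length, fun p a => ?_⟩
    have hreach : dcaRun δ q₀ (word (δ p a)) = dcaRun δ q₀ (word p ++ [a]) := by
      rw [hword, dcaRun_append, hword]; rfl
    simpa using length_cast_eq_of_dcaRun_eq δ hirr he hreach

end Automaton

theorem setGcd_congr {S T : Set ℕ} (h : ∀ e, (∀ n ∈ S, e ∣ n) ↔ ∀ n ∈ T, e ∣ n) :
    setGcd S = setGcd T := by
  simp only [setGcd, h]

theorem period_quotient_eq_period_general {Q A : Type*} (δ : Q → A → Q)
    (hirr : ∀ p q : Q, ∃ w : List A, dcaRun δ p w = q)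
    (s t : Q) (hst : StablePair δ s t)
    (r : Setoid Q)
    (hleast : ∀ r' : Setoid Q,
      (∀ (a : A) (p q : Q), r'.r p q → r'.r (δ p a) (δ q a)) → r'.r s t →
      ∀ p q : Q, r.r p q → r'.r p q)
    (δq : Quotient r → A → Quotient r)
    (hδq : ∀ (p : Q) (a : A), δq ⟦p⟧ a = ⟦δ p a⟧) :
    dcaPeriod δq = dcaPeriod δ := by
  refine setGcd_congr fun e => ⟨fun h n hn => h n (cycleLengths_subset_of_map δ hδq hn), ?_⟩
  intro he
  obtain ⟨φ, hφ⟩ := exists_isPhase hirr he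
  have ker_congr : ∀ (a : A) (p q : Q), φ p = φ q → φ (δ p a) = φ (δ q a) := by
    intro a p q hpq
    rw [hφ, hφ, hpq]
  have hr : ∀ p q, r p q → φ p = φ q :=
    hleast (Setoid.ker φ) ker_congr (hφ.eq_of_synchronizable (hst []))
  exact (hφ.lift hδq hr).dvd_of_mem_cycleLengths

/-- Quotienting an irreducible automaton by the congruence generated by a
stable pair does not change the period. -/
theorem period_quotient_eq_period {Q A : Type*} [Fintype Q] (δ : Q → A → Q)
    (hirr : ∀ p q : Q, ∃ w : List A, dcaRun δ p w = q)
    (s t : Q) (hst : StablePair δ s t)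
    (r : Setoid Q)
    (hcong : ∀ (a : A) (p q : Q), r.r p q → r.r (δ p a) (δ q a))
    (hrst : r.r s t)
    (hleast : ∀ r' : Setoid Q,
      (∀ (a : A) (p q : Q), r'.r p q → r'.r (δ p a) (δ q a)) → r'.r s t →
      ∀ p q : Q, r.r p q → r'.r p q)
    (δq : Quotient r → A → Quotient r)
    (hδq : ∀ (p : Q) (a : A), δq ⟦p⟧ a = ⟦δ p a⟧) :
    dcaPeriod δq = dcaPeriod δ :=
  period_quotient_eq_period_general δ hirr s t hst r hleast δq hδq
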